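/- arXiv:2507.07489 — 5 statements merged into one kernel-verified Lean document; each statement's English description precedes it below -/
import Mathlib

section
/- Let C be a complete category, and let H be a class of objects of C such that a morphism f : X → Y in C is an isomorphism if and only if for each Z ∈ H the map (f ∘ −) : Hom(Z,X) → Hom(Z,Y) is a bijection. Then for any full subcategory E of C containing all objects of H, the inclusion functor E ↪ C preserves all limits that exist in E. -/
/-!
Let `c` be a limit cone in `E` and `t` a limit of its image in `C`; it suffices that the comparison
map `φ : c.pt ⟶ t.pt` is an isomorphism. For `Z ∈ H`, morphisms `Z ⟶ t.pt` are cones over the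
diagram with apex `Z`; since `Z` lies in `E` and `E` is full, these are cones in `E`, which factor
uniquely through `c`. Hence `(· ≫ φ)` is bijective on `Hom(Z, -)` for every `Z ∈ H`, so `φ` is an
isomorphism.
-/

open CategoryTheory Limits

universe w w' v u

theorem CategoryTheory.bijective_comp_of_iso {C : Type*} [Category C] {Z Z' X Y : C} (e : Z ≅ Z')
    (f : X ⟶ Y) (hf : Function.Bijective fun g : Z' ⟶ X => g ≫ f) :
    Function.Bijective fun g : Z ⟶ X => g ≫ f := by
  have : (fun g : Z ⟶ X => g ≫ f) =
      (e.homCongr (Iso.refl Y)).symm ∘ (fun g => g ≫ f) ∘ e.homCongr (Iso.refl X) := by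
    ext g
    simp
  rw [this]
  exact (Equiv.bijective _).comp (hf.comp (Equiv.bijective _))

namespace CategoryTheory.Functor.FullyFaithful

variable {C : Type*} [Category C] {D : Type*} [Category D] {F : D ⥤ C} (hF : F.FullyFaithful)
  {J : Type*} [Category J] {K : J ⥤ D}
include hF

def preimageCone (s : Cone (K ⋙ F)) {W : D} (h : F.obj W ⟶ s.pt) : Cone K where
  pt := W
  π :=
    { app := fun j => hF.preimage (h ≫ s.π.app j)
      naturality := fun j j' f => hF.map_injective <| by
        simpa using congrArg (h ≫ ·) (s.w f).symm }

theorem bijective_comp_lift_mapCone {c : Cone K} (hc : IsLimit c) {t : Cone (K ⋙ F)}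
    (ht : IsLimit t) (W : D) :
    Function.Bijective (fun g : F.obj W ⟶ F.obj c.pt => g ≫ ht.lift (F.mapCone c)) := by
  constructor
  · intro g₁ g₂ hg
    have hpre : hF.preimage g₁ = hF.preimage g₂ := hc.hom_ext fun j => hF.map_injective <| by
      simpa using congrArg (· ≫ t.π.app j) hg
    simpa using congrArg F.map hpre
  · intro h
    refine ⟨F.map (hc.lift (hF.preimageCone t h) : W ⟶ c.pt), ht.hom_ext fun j => ?_⟩
    simp only [Category.assoc, IsLimit.fac, Functor.mapCone_π_app]
    exact (F.map_comp _ _).symm.trans ((congrArg F.map (hc.fac _ j)).trans (hF.map_preimage _))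

theorem preservesLimit_of_isDetecting {G : ObjectProperty C} (hG : G.IsDetecting)
    (hGF : G ≤ F.essImage) [HasLimit (K ⋙ F)] : PreservesLimit K F where
  preserves {c} hc := by
    have : IsIso ((limit.isLimit (K ⋙ F)).lift (F.mapCone c)) := hG _ fun Z hZ => by
      obtain ⟨W, ⟨e⟩⟩ := hGF Z hZ
      exact (Function.bijective_iff_existsUnique _).1 <|
        bijective_comp_of_iso e.symm _ (hF.bijective_comp_lift_mapCone hc _ W)
    exact ⟨IsLimit.ofPointIso (limit.isLimit _)⟩

theorem preservesLimitsOfSize_of_isDetecting [HasLimitsOfSize.{w, w'} C] {G : ObjectProperty C}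
    (hG : G.IsDetecting) (hGF : G ≤ F.essImage) : PreservesLimitsOfSize.{w, w'} F :=
  ⟨⟨hF.preservesLimit_of_isDetecting hG hGF⟩⟩

end CategoryTheory.Functor.FullyFaithful

/-- If isomorphisms in a complete category `C` are detected by a class `H` of objects,
then the inclusion of any full subcategory containing `H` preserves limits. -/
theorem stmt6 {C : Type u} [Category.{v} C] [HasLimits C] (H : Set C)
    (hH : ∀ {X Y : C} (f : X ⟶ Y),
      IsIso f ↔ ∀ Z ∈ H, Function.Bijective (fun g : Z ⟶ X => g ≫ f))
    (P : C → Prop) (hP : ∀ Z ∈ H, P Z) :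
    Nonempty (PreservesLimits (ObjectProperty.ι P)) := by
  have hG : ObjectProperty.IsDetecting (· ∈ H) := fun _ _ f hf =>
    (hH f).2 fun Z hZ => (Function.bijective_iff_existsUnique _).2 (hf Z hZ)
  have hGE : (· ∈ H) ≤ (ObjectProperty.ι P).essImage := fun Z hZ =>
    ⟨⟨Z, hP Z hZ⟩, ⟨Iso.refl _⟩⟩
  exact ⟨(ObjectProperty.fullyFaithfulι P).preservesLimitsOfSize_of_isDetecting hG hGE⟩
end

section
/- Let C be a category admitting a conservative functor to Set that is representable by an object X of C, and suppose C is complete. Then for any full subcategory E of C containing X, the inclusion E ↪ C preserves all limits that exist in E. -/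
open CategoryTheory Limits

universe v u

namespace CategoryTheory.Functor.FullyFaithful

variable {C : Type u} [Category.{v} C] {D : Type*} [Category.{v} D] {G : D ⥤ C}

def compCoyonedaObjIso (hG : G.FullyFaithful) (Y : D) :
    G ⋙ coyoneda.obj (Opposite.op (G.obj Y)) ≅ coyoneda.obj (Opposite.op Y) :=
  NatIso.ofComponents (fun _ => hG.homEquiv.symm.toIso) fun _ => by
    ext; exact hG.map_injective (by simp)

/-- `G ⋙ F` is corepresented by `Y`, hence preserves limits, and `F` reflects them. -/
theorem preservesLimits_of_corepresentable_conservative [HasLimits C] (hG : G.FullyFaithful)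
    (F : C ⥤ Type v) [F.ReflectsIsomorphisms] (Y : D)
    (e : coyoneda.obj (Opposite.op (G.obj Y)) ≅ F) : PreservesLimits G := by
  have : PreservesLimits F := preservesLimits_of_natIso e
  have : ReflectsLimits F := reflectsLimits_of_reflectsIsomorphisms
  have : PreservesLimits (G ⋙ F) :=
    preservesLimits_of_natIso ((hG.compCoyonedaObjIso Y).symm ≪≫ isoWhiskerLeft G e)
  exact preservesLimits_of_reflects_of_preserves G F

end CategoryTheory.Functor.FullyFaithful

/-- If a complete category `C` has a conservative functor to `Set` represented by `X`,
then the inclusion of any full subcategory containing `X` preserves limits. -/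
theorem stmt7 {C : Type u} [Category.{v} C] [HasLimits C] (F : C ⥤ Type v)
    [F.ReflectsIsomorphisms] (X : C) (e : coyoneda.obj (Opposite.op X) ≅ F)
    (P : C → Prop) (hX : P X) :
    Nonempty (PreservesLimits (ObjectProperty.ι P)) :=
  ⟨(ObjectProperty.fullyFaithfulι P).preservesLimits_of_corepresentable_conservative F
    ⟨X, hX⟩ e⟩
end

section
/- If E is a full subcategory of the category KHaus of compact Hausdorff spaces that contains a one-point space, then the inclusion E ↪ KHaus preserves all limits that exist in E. -/
/-!
Maps out of a one-point space `X` are the same as points, so `Hom(X, -)` restricted to `E` is the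
forgetful functor to sets. Being corepresentable, it preserves all limits that exist in `E`, and the
forgetful functor `KHaus ⥤ Type` reflects limits (it creates them). Hence a limit cone in `E` is
sent to a cone in `KHaus` whose underlying cone of sets is a limit, so it is a limit in `KHaus`.
-/

open CategoryTheory Limits Opposite

universe u v

namespace CategoryTheory.Functor.FullyFaithful

variable {E C : Type*} [Category.{v} E] [Category.{v} C] {ι : E ⥤ C}

def coyonedaObjCompIso (hι : ι.FullyFaithful) (X : E) :
    ι ⋙ coyoneda.obj (op (ι.obj X)) ≅ coyoneda.obj (op X) :=
  NatIso.ofComponents (fun _ => hι.homEquiv.symm.toIso) fun f => by ext; simp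

lemma preservesLimits_of_reflectsLimits_coyoneda (hι : ι.FullyFaithful) (X : E)
    [ReflectsLimits (coyoneda.obj (op (ι.obj X)))] : PreservesLimits ι :=
  have := preservesLimits_of_natIso (hι.coyonedaObjCompIso X).symm
  preservesLimits_of_reflects_of_preserves ι (coyoneda.obj (op (ι.obj X)))

end CategoryTheory.Functor.FullyFaithful

namespace CompHaus

noncomputable def coyonedaObjIsoForget (X : CompHaus.{u}) [Nonempty X] [Subsingleton X] :
    coyoneda.obj (op X) ≅ forget CompHaus :=
  NatIso.ofComponents (fun Y => Equiv.toIso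
    { toFun := fun (f : X ⟶ Y) => f (Classical.arbitrary X)
      invFun := fun y => ConcreteCategory.ofHom (ContinuousMap.const X y)
      left_inv := fun (f : X ⟶ Y) => ConcreteCategory.hom_ext _ f fun x => by
        simp [Subsingleton.elim x (Classical.arbitrary X)]
      right_inv := fun _ => rfl }) fun _ => rfl

lemma reflectsLimits_coyoneda_obj (X : CompHaus.{u}) [Nonempty X] [Subsingleton X] :
    ReflectsLimits (coyoneda.obj (op X)) :=
  reflectsLimits_of_natIso (coyonedaObjIsoForget X).symm

end CompHaus

/-- The inclusion of any full subcategory of `CompHaus` containing a one-point space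
preserves limits. -/
theorem stmt10 (P : CompHaus.{u} → Prop) (X : CompHaus.{u})
    (hX : P X) (h₁ : Nonempty X) (h₂ : Subsingleton X) :
    Nonempty (PreservesLimits (ObjectProperty.ι P)) :=
  have : ReflectsLimits (coyoneda.obj (op ((ObjectProperty.ι P).obj ⟨X, hX⟩))) :=
    CompHaus.reflectsLimits_coyoneda_obj X
  ⟨(ObjectProperty.fullyFaithfulι P).preservesLimits_of_reflectsLimits_coyoneda ⟨X, hX⟩⟩
end

section
/- The product space βℕ × βℕ is not extremally disconnected, where βℕ is the Stone–Čech compactification of the discrete natural numbers. -/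
/-!
The points of `X × X` are isolated in `βX × βX`, so for any linear order on `X` the images of
`{x < y}` and `{y < x}` are disjoint open sets. If `z ∈ βX` is an accumulation point of `X`, every
neighbourhood `U ×ˢ U` of `(z, z)` meets both of them, since `U` contains infinitely many points
of `X`. But in an extremally disconnected space disjoint open sets have disjoint closures.
-/

open Set Filter Topology

theorem IsDenseInducing.isOpen_image_of_discreteTopology {α β : Type*} [TopologicalSpace α]
    [DiscreteTopology α] [TopologicalSpace β] [T1Space β] {i : α → β} (di : IsDenseInducing i)
    (s : Set α) : IsOpen (i '' s) := by
  have hsingleton (a : α) : IsOpen ({i a} : Set β) := by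
    have := di.closure_image_mem_nhds (isOpen_discrete {a} |>.mem_nhds rfl)
    rw [image_singleton, closure_singleton] at this
    exact isOpen_iff_mem_nhds.2 fun _ hb ↦ hb ▸ this
  rw [← biUnion_of_singleton s, image_iUnion₂]
  simpa only [image_singleton] using isOpen_biUnion fun a _ ↦ hsingleton a

theorem mem_closure_image_prodMap_of_accPt {α Y : Type*} [TopologicalSpace Y] [T1Space Y]
    {f : α → Y} {z : Y} (hz : AccPt z (𝓟 (range f))) {S : Set (α × α)}
    (hS : ∀ I : Set α, I.Infinite → (S ∩ I ×ˢ I).Nonempty) :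
    (z, z) ∈ closure (Prod.map f f '' S) := by
  have hbasis : (𝓝 (z, z)).HasBasis (· ∈ 𝓝 z) fun U ↦ U ×ˢ U := by
    rw [nhds_prod_eq]
    exact (𝓝 z).basis_sets.prod_self
  refine (mem_closure_iff_nhds_basis hbasis).2 fun U hU ↦ ?_
  have hI : (f ⁻¹' U).Infinite := by
    refine Infinite.of_image f ?_
    rw [image_preimage_eq_inter_range]
    exact Infinite.of_accPt (hz.nhds_inter hU)
  obtain ⟨p, hpS, hp⟩ := hS _ hI
  exact ⟨Prod.map f f p, ⟨p, hpS, rfl⟩, hp⟩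

theorem not_extremallyDisconnected_stoneCech_prod (X : Type*) [TopologicalSpace X]
    [DiscreteTopology X] [Infinite X] :
    ¬ ExtremallyDisconnected (StoneCech X × StoneCech X) := by
  intro hED
  classical
  let _ : LinearOrder X := linearOrderOfSTO WellOrderingRel
  let u : X → StoneCech X := stoneCechUnit
  have hu : Function.Injective u := injective_stoneCechUnit_of_t35Space
  have di : IsDenseInducing (Prod.map u u) :=
    isDenseInducing_stoneCechUnit.prodMap isDenseInducing_stoneCechUnit
  obtain ⟨z, -, hz⟩ := (infinite_range_of_injective hu).exists_accPt_of_subset_isCompact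
    isCompact_univ (subset_univ _)
  have hdisj : Disjoint (Prod.map u u '' {p | p.1 < p.2}) (Prod.map u u '' {p | p.2 < p.1}) := by
    rw [disjoint_image_iff (hu.prodMap hu)]
    exact disjoint_left.2 fun p (h : p.1 < p.2) h' ↦ lt_asymm h h'
  have hlt := mem_closure_image_prodMap_of_accPt hz (S := {p | p.1 < p.2}) fun I hI ↦ by
    obtain ⟨m, hm, n, hn, hmn⟩ := hI.nontrivial.exists_lt
    exact ⟨(m, n), hmn, hm, hn⟩
  have hgt := mem_closure_image_prodMap_of_accPt hz (S := {p | p.2 < p.1}) fun I hI ↦ by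
    obtain ⟨m, hm, n, hn, hmn⟩ := hI.nontrivial.exists_lt
    exact ⟨(n, m), hmn, hn, hm⟩
  exact disjoint_left.1 (hED.disjoint_closure_of_disjoint_isOpen hdisj
    (di.isOpen_image_of_discreteTopology _) (di.isOpen_image_of_discreteTopology _)) hlt hgt

/-- `βℕ × βℕ` is not extremally disconnected. -/
theorem stmt11 : ¬ ExtremallyDisconnected (StoneCech ℕ × StoneCech ℕ) :=
  not_extremallyDisconnected_stoneCech_prod ℕ
end

section
/- In a Priestley space, if the closure of every open upset is a clopen upset, then the downset of every clopen subset is clopen (i.e., every L-space is an Esakia space). -/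
/-!
Since the order of a Priestley space is closed, the downset `D` of a clopen `V` is closed, so
`Dᶜ` is an open upset. Its closure is an upset by assumption, and it misses the open set
`V ⊆ D`, hence misses all of `D`. Thus `Dᶜ` is closed and `D` is clopen.
-/

open Set

section

variable {X : Type*} [TopologicalSpace X]

instance (priority := 100) PriestleySpace.toOrderClosedTopology [Preorder X] [PriestleySpace X] :
    OrderClosedTopology X where
  isClosed_le' := by
    refine isOpen_compl_iff.1 <| isOpen_iff_forall_mem_open.2 fun p hp => ?_
    obtain ⟨U, hU, hUup, hpU, hpU'⟩ := exists_isClopen_upper_of_not_le hp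
    exact ⟨U ×ˢ Uᶜ, fun q ⟨hq₁, hq₂⟩ hq => hq₂ (hUup hq hq₁),
      hU.isOpen.prod hU.isClosed.isOpen_compl, hpU, hpU'⟩

theorem IsCompact.isClosed_lowerClosure [Preorder X] [OrderClosedTopology X] {s : Set X}
    (hs : IsCompact s) : IsClosed (lowerClosure s : Set X) := by
  have : CompactSpace s := isCompact_iff_compactSpace.1 hs
  have hle : IsClosed {p : X × s | p.1 ≤ p.2} :=
    isClosed_le continuous_fst (continuous_subtype_val.comp continuous_snd)
  convert isClosedMap_fst_of_compactSpace _ hle using 1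
  ext x
  simp [mem_lowerClosure]

theorem IsOpen.lowerClosure_of_isUpperSet_closure [Preorder X] {s : Set X} (hs : IsOpen s)
    (h : IsUpperSet (closure (lowerClosure s : Set X)ᶜ)) : IsOpen (lowerClosure s : Set X) := by
  rw [← isClosed_compl_iff, ← closure_subset_iff_isClosed]
  rintro x hx ⟨y, hy, hxy⟩
  have hdisj : Disjoint (closure (lowerClosure s : Set X)ᶜ) s :=
    (disjoint_compl_left_iff_subset.2 subset_lowerClosure).closure_left hs
  exact hdisj.ne_of_mem (h hxy hx) hy rfl

end

/-- Every L-space is an Esakia space: in a Priestley space, if the closure of every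
open upset is a clopen upset, then the downset of every clopen set is clopen. -/
theorem stmt15 {X : Type*} [TopologicalSpace X] [PartialOrder X]
    [CompactSpace X] [PriestleySpace X]
    (hL : ∀ U : Set X, IsOpen U → IsUpperSet U →
      IsClopen (closure U) ∧ IsUpperSet (closure U)) :
    ∀ V : Set X, IsClopen V → IsClopen {x : X | ∃ v ∈ V, x ≤ v} := by
  intro V hV
  have hclosed : IsClosed (lowerClosure V : Set X) := hV.isClosed.isCompact.isClosed_lowerClosure
  have hupper := (hL _ hclosed.isOpen_compl (lowerClosure V).lower.compl).2
  exact ⟨hclosed, hV.isOpen.lowerClosure_of_isUpperSet_closure hupper⟩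
end
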